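/- Let v and w be 2×2 matrices with entries in A satisfying the braiding relation v^{αα'} w^{ββ'} = Σ_{γ,δ,γ',δ'} R̂^{αβ}_{γδ} R̂^{α'β'}_{γ'δ'} w^{γγ'} v^{δδ'} for all indices. Then w v̄ + v w̄ = q⁻² (w·v)·I₂ and w̄ v + v̄ w = q⁻² (w·v)·I₂, where w·v := Σ_{α,β,α',β'} ε_{αβ} ε_{α'β'} w^{αα'} v^{ββ'} and bar denotes the conjugate matrix m̄ := [[m^{22}, −q⁻¹ m^{12}], [−q m^{21}, m^{11}]]. -/
import Mathlib


open Matrix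

variable {R : Type*} [CommRing R] {A : Type*} [Ring A] [Algebra R A]

/-- The q-epsilon tensor: `ε₁₂ = 1`, `ε₂₁ = −q`, `ε₁₁ = ε₂₂ = 0`. -/
def eps (q : R) : Matrix (Fin 2) (Fin 2) R := !![0, 1; -q, 0]

/-- The inverse q-epsilon tensor: `ε¹² = −q⁻¹`, `ε²¹ = 1`, `ε¹¹ = ε²² = 0`. -/
def epsInv (qi : R) : Matrix (Fin 2) (Fin 2) R := !![0, -qi; 1, 0]

/-- The braid matrix entries `R̂^{αβ}_{γδ} = q δ^α_γ δ^β_δ + ε^{αβ} ε_{γδ}`. -/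
def RhatF (q qi : R) (α β γ δ : Fin 2) : R :=
  (if α = γ ∧ β = δ then q else 0) + epsInv qi α β * eps q γ δ

/-- The conjugate matrix `m̄ = [[m²², −q⁻¹m¹²],[−qm²¹, m¹¹]]`. -/
def qconj (q qi : R) (m : Matrix (Fin 2) (Fin 2) A) : Matrix (Fin 2) (Fin 2) A :=
  !![m 1 1, -(qi • m 0 1); -(q • m 1 0), m 0 0]

/-- The q-bilinear pairing `w·v = Σ ε_{αβ} ε_{α'β'} w^{αα'} v^{ββ'}`. -/
def qdot (q : R) (w v : Matrix (Fin 2) (Fin 2) A) : A :=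
  ∑ α : Fin 2, ∑ β : Fin 2, ∑ α' : Fin 2, ∑ β' : Fin 2,
    (eps q α β * eps q α' β') • (w α α' * v β β')

/-- for two matrices `v`, `w` satisfying the braiding relation,
`w v̄ + v w̄ = q⁻²(w·v) I₂` and `w̄ v + v̄ w = q⁻²(w·v) I₂`. -/
theorem braided_anticommutator (q qi : R) (hq : q * qi = 1)
    (v w : Matrix (Fin 2) (Fin 2) A)
    (hbraid : ∀ α α' β β' : Fin 2,
      v α α' * w β β' = ∑ γ : Fin 2, ∑ δ : Fin 2, ∑ γ' : Fin 2, ∑ δ' : Fin 2,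
        (RhatF q qi α β γ δ * RhatF q qi α' β' γ' δ') • (w γ γ' * v δ δ')) :
    w * qconj q qi v + v * qconj q qi w
        = (qi ^ 2 • qdot q w v) • (1 : Matrix (Fin 2) (Fin 2) A) ∧
    qconj q qi w * v + qconj q qi v * w
        = (qi ^ 2 • qdot q w v) • (1 : Matrix (Fin 2) (Fin 2) A) := by
  constructor <;>
  · ext i j
    fin_cases i <;> fin_cases j <;>
    · simp [qconj, qdot, eps, epsInv, RhatF, Matrix.mul_apply, Matrix.one_apply,
        Matrix.vecMul, dotProduct, Matrix.vecHead, Matrix.vecTail,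
        Fin.sum_univ_two, mul_smul_comm, smul_mul_assoc]
      try simp only [hbraid]
      try simp [RhatF, eps, epsInv, Fin.sum_univ_two, mul_smul_comm, smul_mul_assoc]
      match_scalars
      all_goals first
        | ring1
        | linear_combination q * hq
        | linear_combination qi * hq
        | linear_combination (qi - q) * hq
        | linear_combination (-1 : R) * hq
        | linear_combination (-(q * qi + 1)) * hq
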